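/- For the numerical semigroup H = ⟨13, 14, 15, 16, 17, 18, 21, 23⟩ and R = K[H], the trace of the canonical module satisfies tr_R(ω_R) = R : K[t] = t^{26}·K[t], and consequently g(H) = 17, n(H) = 9, and ℓ_R(R/tr_R(ω_R)) = 9 > 8 = g(H) − n(H). -/

import Mathlib

set_option synthInstance.maxHeartbeats 1000000
set_option maxHeartbeats 2000000

noncomputable section

open Polynomial

/-- The length of an `R`-module `M`, realized as the Krull dimension of its lattice of
submodules (for modules of finite length this is the usual Jordan–Hölder length). -/
noncomputable def moduleLength (R M : Type*) [Ring R] [AddCommGroup M] [Module R M] :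
    WithBot ℕ∞ :=
  Order.krullDim (Submodule R M)

/-- The numerical semigroup ring `R = K[H] = K[t^h : h ∈ H]`, realized as the subalgebra of
the rational function field `K(t)` generated by the monomials `t^h`, `h ∈ H`. -/
def nsRing (K : Type*) [Field K] (H : AddSubmonoid ℕ) : Subalgebra K (RatFunc K) :=
  Algebra.adjoin K {x : RatFunc K | ∃ h ∈ H, x = (RatFunc.X : RatFunc K) ^ h}

/-- The (graded) canonical module `ω_R = Σ_{α ∈ ℕ∖H} R·t^{-α}` of `K[H]`, as an
`R`-submodule of `K(t)`. -/
def nsOmega (K : Type*) [Field K] (H : AddSubmonoid ℕ) :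
    Submodule ↥(nsRing K H) (RatFunc K) :=
  Submodule.span ↥(nsRing K H)
    {x : RatFunc K | ∃ α : ℕ, α ∉ H ∧ x = (RatFunc.X : RatFunc K) ^ (-(α : ℤ))}

/-- The canonical ideal `C = t^{F(H)}·ω_R = Σ_{α ∈ ℕ∖H} R·t^{F(H)-α} ⊆ K[t]`. -/
def nsC (K : Type*) [Field K] (H : AddSubmonoid ℕ) (F : ℕ) :
    Submodule ↥(nsRing K H) (RatFunc K) :=
  Submodule.span ↥(nsRing K H)
    {x : RatFunc K | ∃ α : ℕ, α ∉ H ∧ x = (RatFunc.X : RatFunc K) ^ ((F : ℤ) - (α : ℤ))}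


/-- The trace ideal `tr_R(ω_R) = Σ_{f ∈ Hom_R(ω_R, R)} Im f` of the canonical module of
`R = K[H]`. -/
def trOmega (K : Type*) [Field K] (H : AddSubmonoid ℕ) : Ideal ↥(nsRing K H) :=
  ⨆ f : ↥(nsOmega K H) →ₗ[↥(nsRing K H)] ↥(nsRing K H), LinearMap.range f

/-- The image of `K[t]` (= the integral closure of `K[H]`) inside `K(t)`, as an
`R`-submodule. -/
def nsKt (K : Type*) [Field K] (H : AddSubmonoid ℕ) : Submodule ↥(nsRing K H) (RatFunc K) :=
  Submodule.span ↥(nsRing K H) (Set.range (algebraMap (Polynomial K) (RatFunc K)))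

/-- The conductor `R : K[t]`, as an ideal of `R = K[H]`. -/
def nsConductor (K : Type*) [Field K] (H : AddSubmonoid ℕ) : Ideal ↥(nsRing K H) :=
  (((1 : Submodule ↥(nsRing K H) (RatFunc K)) / nsKt K H)).comap
    (Algebra.linearMap ↥(nsRing K H) (RatFunc K))

/-- The numerical semigroup `H = ⟨13, 14, 15, 16, 17, 18, 21, 23⟩`. -/
def H5 : AddSubmonoid ℕ := AddSubmonoid.closure {13, 14, 15, 16, 17, 18, 21, 23}

/-!
An `R`-linear map `f : ω_R → R` is multiplication by `t · f(t⁻¹)`: for a gap `α`, the elements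
`t⁻¹` and `t^{-α}` of `ω_R` become equal after multiplication by suitable monomials of `R`.
Since `t · f(t⁻¹) · t^{-α} ∈ R` for every gap `α`, the polynomial `t · f(t⁻¹)` only involves
exponents `k` with `k - (ℕ ∖ H) ⊆ H`, all of which are `≥ 51`; as `ω_R ⊆ t^{-25} K[t]`, the trace
lies in `t^{26} K[t]`. Conversely multiplication by `t^{n+25}` sends `t^{-25}` to `t^n`, so every
`t^n` with `n ≥ 26` lies in the trace. Hence the trace is the conductor `t^{26} K[t]`.
Modulo `t^{26} K[t]` the monomials `t^h`, `h ∈ H`, `h < 26`, span `R` over `K`, while the ideals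
`R ∩ t^c K[t]` drop strictly exactly at `c ∈ H`; so `R / tr(ω_R)` has length `n(H) = 9`.
-/

lemma Polynomial.exists_coeff_ne_zero_of_coeff_mul_ne_zero {R : Type*} [Semiring R]
    {p q : R[X]} {n : ℕ} (h : (p * q).coeff n ≠ 0) :
    ∃ i j, i + j = n ∧ p.coeff i ≠ 0 ∧ q.coeff j ≠ 0 := by
  rw [coeff_mul] at h
  obtain ⟨⟨i, j⟩, hij, hne⟩ := Finset.exists_ne_zero_of_sum_ne_zero h
  exact ⟨i, j, Finset.HasAntidiagonal.mem_antidiagonal.mp hij, left_ne_zero_of_mul hne,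
    right_ne_zero_of_mul hne⟩

lemma pow_add_mul_zpow_neg {G₀ : Type*} [GroupWithZero G₀] {x : G₀} (hx : x ≠ 0) (a b : ℕ) :
    x ^ (a + b) * x ^ (-(b : ℤ)) = x ^ a := by
  rw [zpow_neg, zpow_natCast, pow_add, mul_inv_cancel_right₀ (pow_ne_zero b hx)]

lemma Module.length_le_card_of_span_eq_top (K : Type*) {R M ι : Type*} [Field K] [Ring R]
    [AddCommGroup M] [Module K M] [Module R M] [SMul K R] [IsScalarTower K R M] [Fintype ι]
    {v : ι → M} (hv : Submodule.span K (Set.range v) = ⊤) :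
    Module.length R M ≤ Fintype.card ι := by
  classical
  have : Module.Finite K M := ⟨⟨Finset.univ.image v, by simpa using hv⟩⟩
  calc Module.length R M = Module.length R (⊤ : Submodule R M) := Module.length_top.symm
    _ ≤ Module.length K ((⊤ : Submodule R M).restrictScalars K) :=
      Submodule.length_le_length_restrictScalars K ⊤
    _ = Module.finrank K M := by
      rw [Submodule.restrictScalars_top, Module.length_top, Module.length_eq_finrank]
    _ ≤ Fintype.card ι := by exact_mod_cast finrank_le_of_span_eq_top hv

section SemigroupRing

variable {K : Type*} [Field K] {H : AddSubmonoid ℕ}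

variable (K H) in
def polySupportedIn : Subalgebra K K[X] where
  carrier := {p | ∀ i, p.coeff i ≠ 0 → i ∈ H}
  add_mem' {p q} hp hq i hi := by
    by_cases hpi : p.coeff i = 0
    · exact hq i (by simpa [hpi] using hi)
    · exact hp i hpi
  mul_mem' {p q} hp hq n hn := by
    obtain ⟨i, j, rfl, hpi, hqj⟩ := exists_coeff_ne_zero_of_coeff_mul_ne_zero hn
    exact add_mem (hp i hpi) (hq j hqj)
  algebraMap_mem' a i hi := by
    rw [Polynomial.algebraMap_apply, Algebra.algebraMap_self, RingHom.id_apply, coeff_C] at hi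
    rw [of_not_not fun hi0 => hi (if_neg hi0)]
    exact zero_mem H

lemma X_pow_mem_nsRing {n : ℕ} (hn : n ∈ H) : (RatFunc.X : RatFunc K) ^ n ∈ nsRing K H :=
  Algebra.subset_adjoin ⟨n, hn, rfl⟩

lemma nsRing_eq_map :
    nsRing K H = (polySupportedIn K H).map (IsScalarTower.toAlgHom K K[X] (RatFunc K)) := by
  apply le_antisymm
  · refine Algebra.adjoin_le ?_
    rintro _ ⟨h, hh, rfl⟩
    refine ⟨X ^ h, fun i hi => ?_, by simp [RatFunc.algebraMap_X]⟩
    rw [coeff_X_pow] at hi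
    rwa [of_not_not fun hih => hi (if_neg hih)]
  · rintro _ ⟨p, hp, rfl⟩
    show algebraMap K[X] (RatFunc K) p ∈ _
    rw [p.as_sum_support_C_mul_X_pow, map_sum]
    refine Subalgebra.sum_mem _ fun i hi => ?_
    rw [map_mul, map_pow, RatFunc.algebraMap_X, RatFunc.algebraMap_C, ← RatFunc.algebraMap_eq_C]
    exact mul_mem (Subalgebra.algebraMap_mem _ _) (X_pow_mem_nsRing (hp i (mem_support_iff.mp hi)))

lemma mem_nsRing_iff {x : RatFunc K} :
    x ∈ nsRing K H ↔
      ∃ p : K[X], (∀ i, p.coeff i ≠ 0 → i ∈ H) ∧ algebraMap K[X] (RatFunc K) p = x := by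
  rw [nsRing_eq_map, Subalgebra.mem_map]
  rfl

lemma algebraMap_mem_nsRing_iff {p : K[X]} :
    algebraMap K[X] (RatFunc K) p ∈ nsRing K H ↔ ∀ i, p.coeff i ≠ 0 → i ∈ H := by
  refine ⟨fun hp => ?_, fun hp => mem_nsRing_iff.mpr ⟨p, hp, rfl⟩⟩
  obtain ⟨q, hq, hqp⟩ := mem_nsRing_iff.mp hp
  rwa [← RatFunc.algebraMap_injective K hqp]

lemma mem_one_iff_mem_nsRing {x : RatFunc K} :
    x ∈ (1 : Submodule (nsRing K H) (RatFunc K)) ↔ x ∈ nsRing K H := by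
  rw [Submodule.mem_one]
  exact ⟨by rintro ⟨y, rfl⟩; exact y.2, fun hx => ⟨⟨x, hx⟩, rfl⟩⟩

lemma algebraMap_X_pow_mul (c : ℕ) (p : K[X]) :
    algebraMap K[X] (RatFunc K) (X ^ c * p) = RatFunc.X ^ c * algebraMap K[X] (RatFunc K) p := by
  rw [map_mul, map_pow, RatFunc.algebraMap_X]

variable (K H) in
def nsXPowKt (c : ℕ) : Submodule (nsRing K H) (RatFunc K) where
  carrier := {x | ∃ p : K[X], x = RatFunc.X ^ c * algebraMap K[X] (RatFunc K) p}
  add_mem' := by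
    rintro _ _ ⟨p, rfl⟩ ⟨q, rfl⟩
    exact ⟨p + q, by rw [map_add, mul_add]⟩
  zero_mem' := ⟨0, by rw [map_zero, mul_zero]⟩
  smul_mem' := by
    rintro ⟨r, hr⟩ _ ⟨p, rfl⟩
    obtain ⟨q, -, rfl⟩ := mem_nsRing_iff.mp hr
    exact ⟨q * p, by rw [Subalgebra.smul_def, smul_eq_mul, map_mul]; ring⟩

lemma algebraMap_mem_nsXPowKt_iff {p : K[X]} {c : ℕ} :
    algebraMap K[X] (RatFunc K) p ∈ nsXPowKt K H c ↔ ∀ i, p.coeff i ≠ 0 → c ≤ i := by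
  have hdvd : algebraMap K[X] (RatFunc K) p ∈ nsXPowKt K H c ↔ X ^ c ∣ p := by
    refine exists_congr fun q => ?_
    rw [← algebraMap_X_pow_mul, (RatFunc.algebraMap_injective K).eq_iff]
  rw [hdvd, X_pow_dvd_iff]
  exact ⟨fun h i hi => not_lt.mp fun hic => hi (h i hic),
    fun h d hd => by_contra fun hne => (h d hne).not_gt hd⟩

lemma nsXPowKt_le_one {c : ℕ} (hc : ∀ n, c ≤ n → n ∈ H) : nsXPowKt K H c ≤ 1 := by
  rintro _ ⟨p, rfl⟩
  rw [mem_one_iff_mem_nsRing, ← algebraMap_X_pow_mul, algebraMap_mem_nsRing_iff]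
  exact fun i hi =>
    hc i ((algebraMap_mem_nsXPowKt_iff (H := H)).mp ⟨p, algebraMap_X_pow_mul c p⟩ i hi)

lemma nsKt_eq : nsKt K H = nsXPowKt K H 0 := by
  have : Set.range (algebraMap K[X] (RatFunc K)) = nsXPowKt K H 0 := by
    ext x
    simp [nsXPowKt, eq_comm]
  rw [nsKt, this, Submodule.span_eq]

theorem one_div_nsKt {F : ℕ} (hF : F ∉ H) (hgt : ∀ n, F < n → n ∈ H) :
    1 / nsKt K H = nsXPowKt K H (F + 1) := by
  apply le_antisymm
  · intro x hx
    rw [Submodule.mem_div_iff_forall_mul_mem, nsKt_eq] at hx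
    have hmul (q : K[X]) : x * algebraMap K[X] (RatFunc K) q ∈ nsRing K H :=
      mem_one_iff_mem_nsRing.mp (hx _ ⟨q, by rw [pow_zero, one_mul]⟩)
    obtain ⟨p, -, rfl⟩ := mem_nsRing_iff.mp (by simpa using hmul 1)
    refine algebraMap_mem_nsXPowKt_iff.mpr fun i hi => ?_
    by_contra hiF
    have hF' := hmul (X ^ (F - i))
    rw [← map_mul, algebraMap_mem_nsRing_iff] at hF'
    refine hF (hF' F ?_)
    rwa [coeff_mul_X_pow', if_pos (by omega), show F - (F - i) = i by omega]
  · rintro _ ⟨p, rfl⟩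
    rw [Submodule.mem_div_iff_forall_mul_mem, nsKt_eq]
    rintro _ ⟨q, rfl⟩
    refine nsXPowKt_le_one (fun n hn => hgt n hn) ⟨p * q, ?_⟩
    rw [pow_zero, one_mul, map_mul, mul_assoc]

variable (K H) in
def nsIdealGE (c : ℕ) : Ideal (nsRing K H) :=
  (nsXPowKt K H c).comap (Algebra.linearMap (nsRing K H) (RatFunc K))

lemma mem_nsIdealGE {c : ℕ} {r : nsRing K H} :
    r ∈ nsIdealGE K H c ↔ (r : RatFunc K) ∈ nsXPowKt K H c :=
  Iff.rfl

theorem nsConductor_eq {F : ℕ} (hF : F ∉ H) (hgt : ∀ n, F < n → n ∈ H) :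
    nsConductor K H = nsIdealGE K H (F + 1) := by
  rw [nsConductor, one_div_nsKt hF hgt]
  rfl

lemma X_pow_mem_nsXPowKt_iff {n c : ℕ} :
    (RatFunc.X : RatFunc K) ^ n ∈ nsXPowKt K H c ↔ c ≤ n := by
  rw [← RatFunc.algebraMap_X, ← map_pow, algebraMap_mem_nsXPowKt_iff]
  simp [coeff_X_pow]

lemma nsIdealGE_succ_le (c : ℕ) : nsIdealGE K H (c + 1) ≤ nsIdealGE K H c := fun r hr => by
  obtain ⟨p, hp⟩ := mem_nsIdealGE.mp hr
  exact mem_nsIdealGE.mpr ⟨X * p, by rw [hp, map_mul, RatFunc.algebraMap_X, pow_succ, mul_assoc]⟩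

lemma nsIdealGE_succ_lt {c : ℕ} (hc : c ∈ H) : nsIdealGE K H (c + 1) < nsIdealGE K H c :=
  SetLike.lt_iff_le_and_exists.mpr ⟨nsIdealGE_succ_le c, ⟨_, X_pow_mem_nsRing hc⟩,
    mem_nsIdealGE.mpr (X_pow_mem_nsXPowKt_iff.mpr le_rfl),
    fun h => by simpa using X_pow_mem_nsXPowKt_iff.mp (mem_nsIdealGE.mp h)⟩

lemma card_le_coheight_nsIdealGE [DecidablePred (· ∈ H)] (c : ℕ) :
    (((Finset.range c).filter (· ∈ H)).card : ℕ∞) ≤ Order.coheight (nsIdealGE K H c) := by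
  induction c with
  | zero => simp
  | succ c ih =>
    rw [Finset.range_add_one, Finset.filter_insert]
    by_cases hc : c ∈ H
    · rw [if_pos hc, Finset.card_insert_of_notMem (by simp), Nat.cast_add, Nat.cast_one]
      exact le_trans (by gcongr) (Order.coheight_add_one_le (nsIdealGE_succ_lt hc))
    · rw [if_neg hc]
      exact ih.trans (Order.coheight_anti (nsIdealGE_succ_le c))

lemma span_monomial_quotient_nsIdealGE [DecidablePred (· ∈ H)] (c : ℕ) :
    Submodule.span K (Set.range fun h : (Finset.range c).filter (· ∈ H) =>
      Ideal.Quotient.mkₐ K (nsIdealGE K H c)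
        ⟨RatFunc.X ^ (h : ℕ), X_pow_mem_nsRing (Finset.mem_filter.mp h.2).2⟩) = ⊤ := by
  set s := (Finset.range c).filter (· ∈ H)
  let mon (h : s) : nsRing K H :=
    ⟨RatFunc.X ^ (h : ℕ), X_pow_mem_nsRing (Finset.mem_filter.mp h.2).2⟩
  refine eq_top_iff.mpr fun m _ => ?_
  obtain ⟨r, rfl⟩ := Ideal.Quotient.mkₐ_surjective K _ m
  obtain ⟨p, hpH, hp⟩ := mem_nsRing_iff.mp r.2
  have hlow : r - ∑ h : s, p.coeff h • mon h ∈ nsIdealGE K H c := by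
    have hcoe : ((r - ∑ h : s, p.coeff h • mon h : nsRing K H) : RatFunc K) =
        algebraMap K[X] (RatFunc K) (p - ∑ h ∈ s, C (p.coeff h) * X ^ h) := by
      rw [map_sub, hp, map_sum, ← Finset.sum_coe_sort s]
      simp [mon, Algebra.smul_def, RatFunc.algebraMap_X, RatFunc.algebraMap_C]
    rw [mem_nsIdealGE, hcoe, algebraMap_mem_nsXPowKt_iff]
    intro i hi
    by_contra hic
    simp only [coeff_sub, finsetSum_coeff, coeff_C_mul_X_pow, Finset.sum_ite_eq, s,
      Finset.mem_filter, Finset.mem_range] at hi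
    by_cases hiH : i ∈ H
    · simp [hiH, not_le.mp hic] at hi
    · exact hi (by simp [hiH, of_not_not (mt (hpH i) hiH)])
  have hm : Ideal.Quotient.mkₐ K (nsIdealGE K H c) r =
      ∑ h : s, p.coeff h • Ideal.Quotient.mkₐ K (nsIdealGE K H c) (mon h) := by
    simp_rw [← map_smul, ← map_sum, Ideal.Quotient.mkₐ_eq_mk]
    exact Ideal.Quotient.eq.mpr hlow
  rw [hm]
  exact Submodule.sum_mem _ fun h _ => Submodule.smul_mem _ _ (Submodule.subset_span ⟨h, rfl⟩)

theorem length_quotient_nsIdealGE (c : ℕ) :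
    Module.length (nsRing K H) (nsRing K H ⧸ nsIdealGE K H c) = {h | h ∈ H ∧ h < c}.ncard := by
  classical
  have hs : {h | h ∈ H ∧ h < c} = ↑((Finset.range c).filter (· ∈ H)) := by
    ext h
    simp [and_comm]
  rw [hs, Set.ncard_coe_finset]
  refine le_antisymm ?_ ?_
  · simpa using Module.length_le_card_of_span_eq_top K (span_monomial_quotient_nsIdealGE c)
  · rw [Module.length_quotient]
    exact card_le_coheight_nsIdealGE c

lemma exists_eq_X_zpow_neg_mul_of_mem_nsOmega {F : ℕ} (hgt : ∀ n, F < n → n ∈ H)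
    {x : RatFunc K} (hx : x ∈ nsOmega K H) :
    ∃ p : K[X], x = RatFunc.X ^ (-(F : ℤ)) * algebraMap K[X] (RatFunc K) p := by
  induction hx using Submodule.span_induction with
  | mem x hx =>
    obtain ⟨α, hα, rfl⟩ := hx
    have hαF : α ≤ F := not_lt.mp fun h => hα (hgt α h)
    refine ⟨X ^ (F - α), ?_⟩
    rw [map_pow, RatFunc.algebraMap_X, ← zpow_natCast, ← zpow_add₀ RatFunc.X_ne_zero]
    congr 1
    omega
  | zero => exact ⟨0, by rw [map_zero, mul_zero]⟩
  | add x y _ _ hx hy =>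
    obtain ⟨p, rfl⟩ := hx
    obtain ⟨q, rfl⟩ := hy
    exact ⟨p + q, by rw [map_add, mul_add]⟩
  | smul r x _ hx =>
    obtain ⟨p, rfl⟩ := hx
    obtain ⟨q, -, hq⟩ := mem_nsRing_iff.mp r.2
    exact ⟨q * p, by rw [Subalgebra.smul_def, smul_eq_mul, ← hq, map_mul]; ring⟩

variable (K H) in
def nsOmegaMulToRing (a : RatFunc K) (ha : ∀ x ∈ nsOmega K H, a * x ∈ nsRing K H) :
    nsOmega K H →ₗ[nsRing K H] nsRing K H where
  toFun y := ⟨a * y, ha y y.2⟩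
  map_add' y z := Subtype.ext (mul_add a y z)
  map_smul' r y := Subtype.ext (mul_left_comm a r y)

variable (K) in
def nsOmegaGen {α : ℕ} (hα : α ∉ H) : nsOmega K H :=
  ⟨RatFunc.X ^ (-(α : ℤ)), Submodule.subset_span ⟨α, hα, rfl⟩⟩

lemma X_pow_mem_trOmega {F n : ℕ} (hF : F ∉ H) (hgt : ∀ n, F < n → n ∈ H) (hn : F < n) :
    (⟨RatFunc.X ^ n, X_pow_mem_nsRing (hgt n hn)⟩ : nsRing K H) ∈ trOmega K H := by
  have hmul (x : RatFunc K) (hx : x ∈ nsOmega K H) : RatFunc.X ^ (n + F) * x ∈ nsRing K H := by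
    obtain ⟨p, rfl⟩ := exists_eq_X_zpow_neg_mul_of_mem_nsOmega hgt hx
    rw [← mul_assoc, pow_add_mul_zpow_neg RatFunc.X_ne_zero]
    exact mem_one_iff_mem_nsRing.mp
      (nsXPowKt_le_one (fun m hm => hgt m (hn.trans_le hm)) ⟨p, rfl⟩)
  refine le_iSup (fun f => LinearMap.range f) (nsOmegaMulToRing K H _ hmul)
    ⟨nsOmegaGen K hF, Subtype.ext ?_⟩
  exact pow_add_mul_zpow_neg RatFunc.X_ne_zero n F

lemma nsIdealGE_le_of_X_pow_mem {c : ℕ} (hc : ∀ n, c ≤ n → n ∈ H) {I : Ideal (nsRing K H)}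
    (hI : ∀ n (hn : c ≤ n), (⟨RatFunc.X ^ n, X_pow_mem_nsRing (hc n hn)⟩ : nsRing K H) ∈ I) :
    nsIdealGE K H c ≤ I := by
  suffices ∀ p : K[X], ∀ r : nsRing K H,
      (r : RatFunc K) = RatFunc.X ^ c * algebraMap K[X] (RatFunc K) p → r ∈ I from
    fun r hr => let ⟨p, hp⟩ := mem_nsIdealGE.mp hr; this p r hp
  intro p
  induction p using Polynomial.induction_on' with
  | add p q hp hq =>
    intro r hr
    have hmem (s : K[X]) : RatFunc.X ^ c * algebraMap K[X] (RatFunc K) s ∈ nsRing K H :=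
      mem_one_iff_mem_nsRing.mp (nsXPowKt_le_one hc ⟨s, rfl⟩)
    have hsplit : r = ⟨_, hmem p⟩ + ⟨_, hmem q⟩ := Subtype.ext (by rw [hr, map_add, mul_add]; rfl)
    rw [hsplit]
    exact add_mem (hp _ rfl) (hq _ rfl)
  | monomial n a =>
    intro r hr
    have hmono : r = a • ⟨RatFunc.X ^ (c + n), X_pow_mem_nsRing (hc _ (Nat.le_add_right c n))⟩ :=
      Subtype.ext (by
        rw [hr, ← C_mul_X_pow_eq_monomial, Subalgebra.coe_smul, Algebra.smul_def, map_mul, map_pow,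
          RatFunc.algebraMap_X, RatFunc.algebraMap_C, RatFunc.algebraMap_eq_C]
        change _ = _ * RatFunc.X ^ (c + n)
        ring)
    rw [hmono]
    exact Submodule.smul_of_tower_mem I a (hI _ (Nat.le_add_right c n))

theorem nsIdealGE_le_trOmega {F : ℕ} (hF : F ∉ H) (hgt : ∀ n, F < n → n ∈ H) :
    nsIdealGE K H (F + 1) ≤ trOmega K H :=
  nsIdealGE_le_of_X_pow_mem (fun n hn => hgt n hn) fun _ hn => X_pow_mem_trOmega hF hgt hn

lemma coe_linearMap_nsOmega_eq_mul (h1 : 1 ∉ H) {F : ℕ} (hgt : ∀ n, F < n → n ∈ H)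
    (f : nsOmega K H →ₗ[nsRing K H] nsRing K H) (y : nsOmega K H) :
    (f y : RatFunc K) = RatFunc.X * (f (nsOmegaGen K h1) : RatFunc K) * (y : RatFunc K) := by
  set a := RatFunc.X * (f (nsOmegaGen K h1) : RatFunc K)
  have hgen {α : ℕ} (hα : α ∉ H) :
      (f (nsOmegaGen K hα) : RatFunc K) = a * RatFunc.X ^ (-(α : ℤ)) := by
    have hα0 : α ≠ 0 := fun h => hα (h ▸ zero_mem H)
    -- both sides are `t ^ F`
    have hrel : (⟨_, X_pow_mem_nsRing (hgt (F + α) (by omega))⟩ : nsRing K H) • nsOmegaGen K hα =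
        (⟨_, X_pow_mem_nsRing (hgt (F + 1) (by omega))⟩ : nsRing K H) • nsOmegaGen K h1 :=
      Subtype.ext ((pow_add_mul_zpow_neg RatFunc.X_ne_zero F α).trans
        (pow_add_mul_zpow_neg RatFunc.X_ne_zero F 1).symm)
    have hf := congrArg Subtype.val (congrArg f hrel)
    rw [map_smul, map_smul] at hf
    change RatFunc.X ^ (F + α) * _ = RatFunc.X ^ (F + 1) * _ at hf
    apply mul_left_cancel₀ (pow_ne_zero (F + α) RatFunc.X_ne_zero)
    rw [hf, show RatFunc.X ^ (F + α) * (a * RatFunc.X ^ (-(α : ℤ))) =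
      a * (RatFunc.X ^ (F + α) * RatFunc.X ^ (-(α : ℤ))) by ring,
      pow_add_mul_zpow_neg RatFunc.X_ne_zero, pow_succ]
    ring
  have hext : Algebra.linearMap (nsRing K H) (RatFunc K) ∘ₗ f =
      LinearMap.mulLeft (nsRing K H) a ∘ₗ (nsOmega K H).subtype := by
    refine LinearMap.ext_on Submodule.span_span_coe_preimage ?_
    rintro x ⟨α, hα, hx⟩
    obtain rfl : x = nsOmegaGen K hα := Subtype.ext hx
    exact hgen hα
  exact LinearMap.congr_fun hext y

lemma le_and_sub_mem_of_coeff_ne_zero {p : K[X]} {a k : ℕ} {x : RatFunc K} (hx : x ∈ nsRing K H)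
    (hpx : algebraMap K[X] (RatFunc K) p = RatFunc.X ^ a * x) (hk : p.coeff k ≠ 0) :
    a ≤ k ∧ k - a ∈ H := by
  obtain ⟨q, hq, rfl⟩ := mem_nsRing_iff.mp hx
  rw [← algebraMap_X_pow_mul, (RatFunc.algebraMap_injective K).eq_iff] at hpx
  subst hpx
  rw [coeff_X_pow_mul'] at hk
  split_ifs at hk with hak
  · exact ⟨hak, hq _ hk⟩
  · exact absurd rfl hk

theorem trOmega_le_nsIdealGE (h1 : 1 ∉ H) {F c : ℕ} (hgt : ∀ n, F < n → n ∈ H)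
    (hc : ∀ k, (∀ α ∉ H, α ≤ k ∧ k - α ∈ H) → F + c ≤ k) :
    trOmega K H ≤ nsIdealGE K H c := by
  refine iSup_le fun f => ?_
  rintro _ ⟨y, rfl⟩
  obtain ⟨q, -, hq⟩ := mem_nsRing_iff.mp (f (nsOmegaGen K h1)).2
  have ha : RatFunc.X * (f (nsOmegaGen K h1) : RatFunc K) ∈ nsXPowKt K H (F + c) := by
    rw [← hq, ← RatFunc.algebraMap_X, ← map_mul, algebraMap_mem_nsXPowKt_iff]
    refine fun k hk => hc k fun α hα =>
      le_and_sub_mem_of_coeff_ne_zero (f (nsOmegaGen K hα)).2 ?_ hk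
    rw [coe_linearMap_nsOmega_eq_mul h1 hgt f, map_mul, RatFunc.algebraMap_X, hq]
    change _ = _ * (_ * _ * RatFunc.X ^ (-(α : ℤ)))
    rw [zpow_neg, zpow_natCast, mul_comm _ (_ ^ α)⁻¹,
      mul_inv_cancel_left₀ (pow_ne_zero α RatFunc.X_ne_zero)]
  obtain ⟨p, hp⟩ := ha
  obtain ⟨s, hs⟩ := exists_eq_X_zpow_neg_mul_of_mem_nsOmega hgt y.2
  refine mem_nsIdealGE.mpr ⟨p * s, ?_⟩
  change (f y : RatFunc K) = _
  rw [coe_linearMap_nsOmega_eq_mul h1 hgt f y, hp, hs, map_mul, add_comm F c,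
    show ∀ u v w : RatFunc K, RatFunc.X ^ (c + F) * u * (w * v) = RatFunc.X ^ (c + F) * w * (u * v)
      from fun _ _ _ => by ring, pow_add_mul_zpow_neg RatFunc.X_ne_zero]

end SemigroupRing

namespace H5

lemma mem_of_mem_generators {n : ℕ} (h : n ∈ ({13, 14, 15, 16, 17, 18, 21, 23} : Set ℕ)) :
    n ∈ H5 :=
  AddSubmonoid.subset_closure h

lemma mem_of_le {n : ℕ} (hn : 26 ≤ n) : n ∈ H5 := by
  induction n using Nat.strong_induction_on with
  | _ n ih =>
    have sum_mem {a : ℕ} (ha : a ∈ H5) (hna : a ≤ n) (hb : n - a ∈ H5) : n ∈ H5 := by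
      simpa [Nat.add_sub_cancel' hna] using add_mem ha hb
    have gen {m : ℕ} (h : 13 ≤ m ∧ m ≤ 18 ∨ m = 21) : m ∈ H5 :=
      mem_of_mem_generators (by simp only [Set.mem_insert_iff, Set.mem_singleton_iff]; omega)
    rcases (by omega : n ≤ 31 ∨ 31 < n ∧ n ≤ 36 ∨ 36 < n ∧ n ≤ 38 ∨ 39 ≤ n) with h | h | h | h
    · exact sum_mem (a := 13) (gen (by omega)) (by omega) (gen (by omega))
    · exact sum_mem (a := 18) (gen (by omega)) (by omega) (gen (by omega))
    · exact sum_mem (a := 21) (gen (by omega)) (by omega) (gen (by omega))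
    · exact sum_mem (a := 13) (gen (by omega)) (by omega) (ih _ (by omega) (by omega))

lemma mem_iff {n : ℕ} : n ∈ H5 ↔ n = 0 ∨ 13 ≤ n ∧ n ≤ 18 ∨ n = 21 ∨ n = 23 ∨ 26 ≤ n := by
  constructor
  · let M : AddSubmonoid ℕ :=
      { carrier := {n | n = 0 ∨ 13 ≤ n ∧ n ≤ 18 ∨ n = 21 ∨ n = 23 ∨ 26 ≤ n}
        add_mem' := by simp only [Set.mem_ofPred_eq]; omega
        zero_mem' := by simp }
    refine fun hn => AddSubmonoid.closure_le (S := M).2 (fun m hm => ?_) hn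
    simp only [Set.mem_insert_iff, Set.mem_singleton_iff] at hm
    simp only [M, AddSubmonoid.coe_set_mk, AddSubsemigroup.coe_set_mk, Set.mem_ofPred_eq]
    omega
  · rintro (rfl | h | h)
    · exact zero_mem _
    · exact mem_of_mem_generators (by simp only [Set.mem_insert_iff, Set.mem_singleton_iff]; omega)
    · rcases h with h | h | h
      · exact mem_of_mem_generators (by simp [h])
      · exact mem_of_mem_generators (by simp [h])
      · exact mem_of_le h

lemma setOf_not_mem : {n : ℕ | n ∉ H5} =
    ↑({1, 2, 3, 4, 5, 6, 7, 8, 9, 10, 11, 12, 19, 20, 22, 24, 25} : Finset ℕ) := by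
  ext n
  simp only [Set.mem_ofPred_eq, mem_iff, Finset.coe_insert, Finset.coe_singleton,
    Set.mem_insert_iff, Set.mem_singleton_iff]
  omega

lemma sSup_setOf_not_mem : sSup {n : ℕ | n ∉ H5} = 25 := by
  refine IsGreatest.csSup_eq ⟨by simp [mem_iff], fun n hn => ?_⟩
  simp only [Set.mem_ofPred_eq, mem_iff] at hn
  omega

lemma setOf_mem_lt_25 : {h : ℕ | h ∈ H5 ∧ h < 25} =
    ↑({0, 13, 14, 15, 16, 17, 18, 21, 23} : Finset ℕ) := by
  ext n
  simp only [Set.mem_ofPred_eq, mem_iff, Finset.coe_insert, Finset.coe_singleton,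
    Set.mem_insert_iff, Set.mem_singleton_iff]
  omega

lemma le_of_forall_sub_gap_mem {k : ℕ} (hk : ∀ α ∉ H5, α ≤ k ∧ k - α ∈ H5) : 51 ≤ k := by
  have h19 := hk 19 (by simp [mem_iff])
  have h20 := hk 20 (by simp [mem_iff])
  have h24 := hk 24 (by simp [mem_iff])
  have h25 := hk 25 (by simp [mem_iff])
  simp only [mem_iff] at h19 h20 h24 h25
  omega

end H5

/-- For `H = ⟨13, 14, 15, 16, 17, 18, 21, 23⟩` and `R = K[H]` one has
`tr_R(ω_R) = R : K[t]`, `R : K[t] = t^{26}·K[t]`, `g(H) = 17`, `n(H) = 9` (where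
`F(H) = sSup (ℕ∖H)`), `ℓ_R(R/tr_R(ω_R)) = 9`, and `9 > 8 = g(H) − n(H)`. -/
theorem trace_example_13_14 (K : Type*) [Field K] :
    (trOmega K H5 = nsConductor K H5) ∧
    ((1 : Submodule ↥(nsRing K H5) (RatFunc K)) / nsKt K H5 =
        Submodule.span ↥(nsRing K H5) {x : RatFunc K | ∃ p : Polynomial K,
          x = (RatFunc.X : RatFunc K) ^ 26 * algebraMap (Polynomial K) (RatFunc K) p}) ∧
    ({n : ℕ | n ∉ H5}.ncard = 17) ∧
    ({h : ℕ | h ∈ H5 ∧ h < sSup {n : ℕ | n ∉ H5}}.ncard = 9) ∧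
    (moduleLength ↥(nsRing K H5) (↥(nsRing K H5) ⧸ trOmega K H5) = 9) ∧
    9 > 17 - 9 := by
  have h1 : 1 ∉ H5 := by simp [H5.mem_iff]
  have h25 : 25 ∉ H5 := by simp [H5.mem_iff]
  have hgt (n : ℕ) (hn : 25 < n) : n ∈ H5 := H5.mem_of_le hn
  have htr : trOmega K H5 = nsIdealGE K H5 26 :=
    le_antisymm (trOmega_le_nsIdealGE h1 hgt fun _ hk => H5.le_of_forall_sub_gap_mem hk)
      (nsIdealGE_le_trOmega h25 hgt)
  have hn : {h | h ∈ H5 ∧ h < 26} = {h | h ∈ H5 ∧ h < 25} := by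
    ext h
    simp only [Set.mem_ofPred_eq, H5.mem_iff]
    omega
  refine ⟨by rw [htr, nsConductor_eq h25 hgt], ?_, ?_, ?_, ?_, by norm_num⟩
  · rw [one_div_nsKt h25 hgt, ← Submodule.span_eq (nsXPowKt K H5 (25 + 1))]
    rfl
  · rw [H5.setOf_not_mem, Set.ncard_coe_finset]
    rfl
  · rw [H5.sSup_setOf_not_mem, H5.setOf_mem_lt_25, Set.ncard_coe_finset]
    rfl
  · rw [moduleLength, htr, ← Module.coe_length, length_quotient_nsIdealGE, hn, H5.setOf_mem_lt_25,
      Set.ncard_coe_finset]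
    rfl
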